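/- Deterministic consensus under square-summable stepsizes: Let x^{k+1} = (W ⊗ I_d)(x^k − λ^k u^k) with W symmetric doubly stochastic and η := ‖W − (1/m)𝟏𝟏ᵀ‖ ∈ (0,1), and averages x̄^k := (1/m)Σ_i x_i^k. If Σ_{k=0}^∞ (λ^k)² < ∞ and sup_k ‖u^k‖ < ∞, then (1 − η) Σ_{k=0}^∞ ‖x^k − x̄^k ⊗ 𝟏‖² ≤ ‖x^0 − x̄^0 ⊗ 𝟏‖² + (η²/(1 − η)) Σ_{k=0}^∞ (λ^k)² ‖u^k‖² < ∞; in particular ‖x_i^k − x̄^k‖ → 0 as k → ∞ for every i. -/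

import Mathlib

open Filter
open scoped Matrix

/-- The Euclidean norm of the stacked vector `(y 1, …, y m) ∈ ℝ^{md}`. -/
noncomputable def stackedNorm {m d : ℕ} (y : Fin m → EuclideanSpace ℝ (Fin d)) : ℝ :=
  Real.sqrt (∑ i, ‖y i‖ ^ 2)

/-!
Because `W` is doubly stochastic, the consensus error `x^k - x̄^k ⊗ 𝟏` evolves by
`e^{k+1} = (B ⊗ I_d)(e^k - λ^k u^k)` with `B = W - (1/m)𝟏𝟏ᵀ`, so
`‖e^{k+1}‖ ≤ η (‖e^k‖ + |λ^k| ‖u^k‖)`. Young's inequality turns this into the contraction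
`‖e^{k+1}‖² ≤ η ‖e^k‖² + η²/(1-η) (λ^k)² ‖u^k‖²`, and summing over `k` bounds `(1-η) Σ ‖e^k‖²`
by `‖e^0‖²` plus the summable disturbance terms; summability forces `e^k → 0`.
-/

section StackedNorm

variable {m d : ℕ}

lemma stackedNorm_eq_norm_toLp (y : Fin m → EuclideanSpace ℝ (Fin d)) :
    stackedNorm y = ‖WithLp.toLp 2 y‖ :=
  (PiLp.norm_eq_of_L2 _).symm

lemma stackedNorm_nonneg (y : Fin m → EuclideanSpace ℝ (Fin d)) : 0 ≤ stackedNorm y :=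
  Real.sqrt_nonneg _

lemma stackedNorm_sq (y : Fin m → EuclideanSpace ℝ (Fin d)) :
    stackedNorm y ^ 2 = ∑ i, ‖y i‖ ^ 2 :=
  Real.sq_sqrt (by positivity)

lemma stackedNorm_sub_le (y z : Fin m → EuclideanSpace ℝ (Fin d)) :
    stackedNorm (y - z) ≤ stackedNorm y + stackedNorm z := by
  simpa only [stackedNorm_eq_norm_toLp, WithLp.toLp_sub] using norm_sub_le _ _

lemma stackedNorm_smul (c : ℝ) (y : Fin m → EuclideanSpace ℝ (Fin d)) :
    stackedNorm (c • y) = |c| * stackedNorm y := by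
  rw [stackedNorm_eq_norm_toLp, stackedNorm_eq_norm_toLp, WithLp.toLp_smul, norm_smul,
    Real.norm_eq_abs]

lemma norm_le_stackedNorm (y : Fin m → EuclideanSpace ℝ (Fin d)) (i : Fin m) :
    ‖y i‖ ≤ stackedNorm y := by
  simpa only [stackedNorm_eq_norm_toLp] using PiLp.norm_apply_le (WithLp.toLp 2 y) i

lemma sum_sq_mulVec_le (B : Matrix (Fin m) (Fin m) ℝ) (w : Fin m → ℝ) :
    ∑ i, (B *ᵥ w) i ^ 2 ≤ ‖Matrix.toEuclideanCLM (𝕜 := ℝ) (n := Fin m) B‖ ^ 2 * ∑ j, w j ^ 2 := by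
  have h := (Matrix.toEuclideanCLM (𝕜 := ℝ) (n := Fin m) B).le_opNorm (WithLp.toLp 2 w)
  have h2 := pow_le_pow_left₀ (norm_nonneg _) h 2
  rwa [mul_pow, Matrix.toEuclideanCLM_toLp, EuclideanSpace.real_norm_sq_eq,
    EuclideanSpace.real_norm_sq_eq] at h2

lemma stackedNorm_matrix_smul_le (B : Matrix (Fin m) (Fin m) ℝ)
    (v : Fin m → EuclideanSpace ℝ (Fin d)) :
    stackedNorm (fun i => ∑ j, B i j • v j)
      ≤ ‖Matrix.toEuclideanCLM (𝕜 := ℝ) (n := Fin m) B‖ * stackedNorm v := by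
  set η := ‖Matrix.toEuclideanCLM (𝕜 := ℝ) (n := Fin m) B‖
  refine (pow_le_pow_iff_left₀ (stackedNorm_nonneg _)
    (mul_nonneg (norm_nonneg _) (stackedNorm_nonneg _)) two_ne_zero).1 ?_
  calc stackedNorm (fun i => ∑ j, B i j • v j) ^ 2
      = ∑ l : Fin d, ∑ i, (B *ᵥ fun j => v j l) i ^ 2 := by
        simp only [stackedNorm_sq, EuclideanSpace.real_norm_sq_eq, WithLp.ofLp_sum,
          WithLp.ofLp_smul, Finset.sum_apply, Pi.smul_apply, smul_eq_mul, Matrix.mulVec, dotProduct]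
        exact Finset.sum_comm
    _ ≤ ∑ l : Fin d, η ^ 2 * ∑ j, v j l ^ 2 :=
        Finset.sum_le_sum fun l _ => sum_sq_mulVec_le B _
    _ = (η * stackedNorm v) ^ 2 := by
        rw [mul_pow, stackedNorm_sq, ← Finset.mul_sum, Finset.sum_comm]
        simp only [EuclideanSpace.real_norm_sq_eq]

end StackedNorm

-- `z - z̄ ⊗ 𝟏` in the paper's notation
noncomputable def consensusError {E : Type*} [AddCommGroup E] [Module ℝ E] {m : ℕ}
    (z : Fin m → E) : Fin m → E :=
  fun i => z i - (m : ℝ)⁻¹ • ∑ j, z j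

section Consensus

variable {E : Type*} [AddCommGroup E] [Module ℝ E] {m : ℕ} (W : Matrix (Fin m) (Fin m) ℝ)

lemma consensusError_mix (hWcol : (fun _ => (1 : ℝ)) ᵥ* W = fun _ => 1) (z : Fin m → E) :
    consensusError (fun i => ∑ j, W i j • z j) = fun i => ∑ j, (W i j - (m : ℝ)⁻¹) • z j := by
  have hcol : ∀ j, ∑ i, W i j = 1 := fun j => by
    simpa [Matrix.vecMul, dotProduct] using congrFun hWcol j
  have hsum : ∑ i, ∑ j, W i j • z j = ∑ j, z j := by
    rw [Finset.sum_comm]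
    simp_rw [← Finset.sum_smul, hcol, one_smul]
  funext i
  simp [consensusError, hsum, sub_smul, Finset.smul_sum]

lemma sum_centered_smul_sub_const (hWrow : W *ᵥ (fun _ => (1 : ℝ)) = fun _ => 1)
    (z : Fin m → E) (c : E) (i : Fin m) :
    ∑ j, (W i j - (m : ℝ)⁻¹) • (z j - c) = ∑ j, (W i j - (m : ℝ)⁻¹) • z j := by
  have hm : (m : ℝ) ≠ 0 := Nat.cast_ne_zero.2 (Fin.pos i).ne'
  have hrow : ∑ j, W i j = 1 := by simpa [Matrix.mulVec, dotProduct] using congrFun hWrow i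
  simp [smul_sub, Finset.sum_sub_distrib, ← Finset.sum_smul, hrow, hm]

end Consensus

lemma sq_le_mul_sq_add_of_le_mul_add {η a c e : ℝ} (hη0 : 0 ≤ η) (hη1 : η < 1) (he : 0 ≤ e)
    (h : e ≤ η * (a + c)) : e ^ 2 ≤ η * a ^ 2 + η ^ 2 / (1 - η) * c ^ 2 := by
  have h1η : 0 < 1 - η := by linarith
  have hsq : e ^ 2 ≤ η ^ 2 * (a + c) ^ 2 := by
    simpa only [mul_pow] using pow_le_pow_left₀ he h 2
  have hyoung : η ^ 2 * (a + c) ^ 2 ≤ η * a ^ 2 + η ^ 2 / (1 - η) * c ^ 2 := by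
    rw [div_mul_eq_mul_div, ← sub_le_iff_le_add', le_div_iff₀ h1η]
    -- Young's inequality `2ac ≤ t a² + c² / t` with `t = (1 - η) / η`, as a perfect square
    nlinarith [mul_nonneg hη0 (sq_nonneg ((1 - η) * a - η * c))]
  exact hsq.trans hyoung

lemma summable_and_tsum_le_of_le_mul_add {η : ℝ} {a b : ℕ → ℝ} (hη0 : 0 ≤ η) (hη1 : η < 1)
    (ha : ∀ k, 0 ≤ a k) (hb0 : ∀ k, 0 ≤ b k) (hb : Summable b)
    (h : ∀ k, a (k + 1) ≤ η * a k + b k) :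
    Summable a ∧ (1 - η) * ∑' k, a k ≤ a 0 + ∑' k, b k := by
  have h1η : 0 < 1 - η := by linarith
  have hpartial : ∀ n, ∑ k ∈ Finset.range n, a k ≤ (a 0 + ∑' k, b k) / (1 - η) := by
    intro n
    rw [le_div_iff₀' h1η]
    have hshift : ∑ k ∈ Finset.range n, a (k + 1)
        ≤ η * ∑ k ∈ Finset.range n, a k + ∑ k ∈ Finset.range n, b k := by
      rw [Finset.mul_sum, ← Finset.sum_add_distrib]
      exact Finset.sum_le_sum fun k _ => h k
    have hmono : ∑ k ∈ Finset.range n, a k ≤ ∑ k ∈ Finset.range (n + 1), a k :=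
      Finset.sum_le_sum_of_subset_of_nonneg (by simp) fun k _ _ => ha k
    have hbn : ∑ k ∈ Finset.range n, b k ≤ ∑' k, b k := hb.sum_le_tsum _ fun k _ => hb0 k
    have hsplit := Finset.sum_range_succ' a n
    have := mul_le_mul_of_nonneg_left hmono hη0
    linarith
  have hsum : Summable a := summable_of_sum_range_le ha hpartial
  exact ⟨hsum, (le_div_iff₀' h1η).1 (hsum.tsum_le_of_sum_range_le hpartial)⟩

lemma stackedNorm_consensusError_mix_le {m d : ℕ} (W : Matrix (Fin m) (Fin m) ℝ)
    (hWrow : W *ᵥ (fun _ => (1 : ℝ)) = fun _ => 1)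
    (hWcol : (fun _ => (1 : ℝ)) ᵥ* W = fun _ => 1)
    (x u : Fin m → EuclideanSpace ℝ (Fin d)) (c : ℝ) :
    stackedNorm (consensusError fun i => ∑ j, W i j • (x j - c • u j))
      ≤ ‖Matrix.toEuclideanCLM (𝕜 := ℝ) (n := Fin m)
          (W - (m : ℝ)⁻¹ • Matrix.of (fun _ _ => (1 : ℝ)))‖
        * (stackedNorm (consensusError x) + |c| * stackedNorm u) := by
  set B : Matrix (Fin m) (Fin m) ℝ := W - (m : ℝ)⁻¹ • Matrix.of (fun _ _ => (1 : ℝ))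
  have hmix : (consensusError fun i => ∑ j, W i j • (x j - c • u j))
      = fun i => ∑ j, B i j • (consensusError x - c • u) j := by
    rw [consensusError_mix W hWcol]
    funext i
    rw [← sum_centered_smul_sub_const W hWrow _ ((m : ℝ)⁻¹ • ∑ j, x j) i]
    simp [B, consensusError, sub_right_comm]
  rw [hmix, ← stackedNorm_smul]
  exact (stackedNorm_matrix_smul_le B _).trans
    (mul_le_mul_of_nonneg_left (stackedNorm_sub_le _ _) (norm_nonneg _))

lemma tendsto_norm_apply_of_summable_stackedNorm_sq {m d : ℕ}
    {y : ℕ → Fin m → EuclideanSpace ℝ (Fin d)} (h : Summable fun k => stackedNorm (y k) ^ 2)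
    (i : Fin m) : Tendsto (fun k => ‖y k i‖) atTop (nhds 0) := by
  have hsq : Tendsto (fun k => stackedNorm (y k)) atTop (nhds 0) := by
    simpa [Function.comp_def, Real.sqrt_sq (stackedNorm_nonneg _)] using
      (Real.continuous_sqrt.tendsto 0).comp h.tendsto_atTop_zero
  exact squeeze_zero (fun _ => norm_nonneg _) (fun k => norm_le_stackedNorm _ i) hsq

theorem deterministic_consensus_general
    {m d : ℕ}
    (W : Matrix (Fin m) (Fin m) ℝ)
    (hWrow : W *ᵥ (fun _ => (1 : ℝ)) = fun _ => 1)
    (hWcol : (fun _ => (1 : ℝ)) ᵥ* W = fun _ => 1)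
    (η : ℝ)
    (hη : η = ‖Matrix.toEuclideanCLM (𝕜 := ℝ) (n := Fin m)
        (W - (m : ℝ)⁻¹ • Matrix.of (fun _ _ => (1 : ℝ)))‖)
    (hη1 : η < 1)
    (lam : ℕ → ℝ)
    (hsq : Summable (fun k => lam k ^ 2))
    (u : ℕ → Fin m → EuclideanSpace ℝ (Fin d))
    (C : ℝ) (hu : ∀ k, stackedNorm (u k) ≤ C)
    (x : ℕ → Fin m → EuclideanSpace ℝ (Fin d))
    (hx : ∀ k i, x (k + 1) i = ∑ j, W i j • (x k j - lam k • u k j)) :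
    Summable (fun k => lam k ^ 2 * stackedNorm (u k) ^ 2)
    ∧ Summable (fun k => stackedNorm (fun i => x k i - (m : ℝ)⁻¹ • ∑ i', x k i') ^ 2)
    ∧ (1 - η) * ∑' k, stackedNorm (fun i => x k i - (m : ℝ)⁻¹ • ∑ i', x k i') ^ 2
        ≤ stackedNorm (fun i => x 0 i - (m : ℝ)⁻¹ • ∑ i', x 0 i') ^ 2
          + (η ^ 2 / (1 - η)) * ∑' k, lam k ^ 2 * stackedNorm (u k) ^ 2
    ∧ ∀ i, Tendsto (fun k => ‖x k i - (m : ℝ)⁻¹ • ∑ i', x k i'‖) atTop (nhds 0) := by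
  have hη0 : 0 ≤ η := hη ▸ norm_nonneg _
  have hb : Summable fun k => lam k ^ 2 * stackedNorm (u k) ^ 2 := by
    refine (hsq.mul_right (C ^ 2)).of_nonneg_of_le (fun k => by positivity) fun k => ?_
    gcongr
    · exact stackedNorm_nonneg _
    · exact hu k
  have hrec : ∀ k, stackedNorm (consensusError (x (k + 1))) ^ 2
      ≤ η * stackedNorm (consensusError (x k)) ^ 2
        + η ^ 2 / (1 - η) * (lam k ^ 2 * stackedNorm (u k) ^ 2) := fun k => by
    have hstep := stackedNorm_consensusError_mix_le W hWrow hWcol (x k) (u k) (lam k)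
    rw [← funext (hx k), ← hη] at hstep
    simpa only [mul_pow, sq_abs] using
      sq_le_mul_sq_add_of_le_mul_add hη0 hη1 (stackedNorm_nonneg _) hstep
  have hD : 0 ≤ η ^ 2 / (1 - η) := div_nonneg (sq_nonneg η) (by linarith)
  obtain ⟨ha, hle⟩ := summable_and_tsum_le_of_le_mul_add
    (a := fun k => stackedNorm (consensusError (x k)) ^ 2) hη0 hη1 (fun k => sq_nonneg _)
    (fun k => mul_nonneg hD (by positivity)) (hb.mul_left _) hrec
  rw [tsum_mul_left] at hle
  exact ⟨hb, ha, hle, tendsto_norm_apply_of_summable_stackedNorm_sq ha⟩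

/-- **Deterministic consensus under square-summable stepsizes**: for the dynamics
`x^{k+1} = (W ⊗ I_d)(x^k - λ^k u^k)` with `W` symmetric doubly stochastic,
`η = ‖W - (1/m)𝟙𝟙ᵀ‖ ∈ (0,1)`, square-summable stepsizes and bounded disturbances,
`(1-η)∑_k ‖x^k - x̄^k ⊗ 𝟙‖² ≤ ‖x^0 - x̄^0 ⊗ 𝟙‖² + (η²/(1-η))∑_k (λ^k)²‖u^k‖² < ∞`;
in particular `‖x_i^k - x̄^k‖ → 0` for every `i`. -/
theorem deterministic_consensus
    {m d : ℕ} (hm : 0 < m)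
    (W : Matrix (Fin m) (Fin m) ℝ)
    (hWsymm : W.IsSymm)
    (hWnonneg : ∀ i j, 0 ≤ W i j)
    (hWrow : W *ᵥ (fun _ => (1 : ℝ)) = fun _ => 1)
    (hWcol : (fun _ => (1 : ℝ)) ᵥ* W = fun _ => 1)
    (η : ℝ)
    (hη : η = ‖Matrix.toEuclideanCLM (𝕜 := ℝ) (n := Fin m)
        (W - (m : ℝ)⁻¹ • Matrix.of (fun _ _ => (1 : ℝ)))‖)
    (hη0 : 0 < η) (hη1 : η < 1)
    (lam : ℕ → ℝ) (hlam : ∀ k, 0 ≤ lam k)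
    (hsq : Summable (fun k => lam k ^ 2))
    (u : ℕ → Fin m → EuclideanSpace ℝ (Fin d))
    (C : ℝ) (hu : ∀ k, stackedNorm (u k) ≤ C)
    (x : ℕ → Fin m → EuclideanSpace ℝ (Fin d))
    (hx : ∀ k i, x (k + 1) i = ∑ j, W i j • (x k j - lam k • u k j)) :
    Summable (fun k => lam k ^ 2 * stackedNorm (u k) ^ 2)
    ∧ Summable (fun k => stackedNorm (fun i => x k i - (m : ℝ)⁻¹ • ∑ i', x k i') ^ 2)
    ∧ (1 - η) * ∑' k, stackedNorm (fun i => x k i - (m : ℝ)⁻¹ • ∑ i', x k i') ^ 2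
        ≤ stackedNorm (fun i => x 0 i - (m : ℝ)⁻¹ • ∑ i', x 0 i') ^ 2
          + (η ^ 2 / (1 - η)) * ∑' k, lam k ^ 2 * stackedNorm (u k) ^ 2
    ∧ ∀ i, Tendsto (fun k => ‖x k i - (m : ℝ)⁻¹ • ∑ i', x k i'‖) atTop (nhds 0) :=
  deterministic_consensus_general W hWrow hWcol η hη hη1 lam hsq u C hu x hx
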